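/- Let n, m ≥ 2 and 1 ≤ k < m, and let T be any deterministic decision tree computing h_{k,n,m}. Then for every function ℓ : [m] → [n], when the computation of T on the input x^ℓ reaches its output leaf (which is labeled 0, since x^ℓ is a 0-input), either at least m − k + 1 of the cells queried along the way have value 0, or the total number of cells queried exceeds n(m−k) − 2m. -/

import Mathlib

open Classical
open scoped ENNReal

set_option maxHeartbeats 1000000

/-! ### Deterministic decision trees -/

inductive DTree (ι σ : Type) : Type
  | leaf (b : Bool) : DTree ι σ
  | node (v : ι) (child : σ → DTree ι σ) : DTree ι σ

namespace DTree

variable {ι σ : Type}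

/-- The output of the decision tree on input `x`. -/
def eval (x : ι → σ) : DTree ι σ → Bool
  | leaf b => b
  | node v child => (child (x v)).eval x

/-- The list of variables queried by the decision tree on input `x`,
in the order they are queried. -/
def queryList (x : ι → σ) : DTree ι σ → List ι
  | leaf _ => []
  | node v child => v :: (child (x v)).queryList x

/-- The cost of the decision tree on input `x`: the number of internal nodes visited. -/
def cost (T : DTree ι σ) (x : ι → σ) : ℕ := (T.queryList x).length

/-- `T` computes `f` if it outputs `f x` on every input `x`. -/
def Computes (T : DTree ι σ) (f : (ι → σ) → Bool) : Prop := ∀ x, T.eval x = f x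

end DTree

/-- Deterministic query complexity. -/
noncomputable def detComplexity {ι σ : Type} (f : (ι → σ) → Bool) : ℕ :=
  sInf {d : ℕ | ∃ T : DTree ι σ, T.Computes f ∧ ∀ x, T.cost x ≤ d}

/-- Expected cost of a randomized decision tree (a distribution over deterministic
decision trees) on input `x`. -/
noncomputable def expCost {ι σ : Type} (μ : PMF (DTree ι σ)) (x : ι → σ) : ℝ≥0∞ :=
  ∑' T : DTree ι σ, μ T * (T.cost x : ℝ≥0∞)

/-- Zero-error (Las Vegas) randomized query complexity. -/
noncomputable def R0query {ι σ : Type} (f : (ι → σ) → Bool) : ℝ≥0∞ :=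
  ⨅ μ ∈ {μ : PMF (DTree ι σ) | ∀ T ∈ μ.support, T.Computes f},
    ⨆ x : ι → σ, expCost μ x

/-- One-sided error randomized query complexity. -/
noncomputable def R1query {ι σ : Type} (f : (ι → σ) → Bool) : ℝ≥0∞ :=
  ⨅ μ ∈ {μ : PMF (DTree ι σ) |
      (∀ x, f x = false → ∀ T ∈ μ.support, T.eval x = false) ∧
      (∀ x, f x = true → 1 / 2 ≤ ∑' T : DTree ι σ, if T.eval x = true then μ T else 0)},
    ⨆ x : ι → σ, expCost μ x

/-- Bounded-error (Monte Carlo) randomized query complexity. -/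
noncomputable def Rquery {ι σ : Type} (f : (ι → σ) → Bool) : ℝ≥0∞ :=
  ⨅ μ ∈ {μ : PMF (DTree ι σ) |
      ∀ x, 9 / 10 ≤ ∑' T : DTree ι σ, if T.eval x = f x then μ T else 0},
    ⨆ x : ι → σ, expCost μ x
/-! ### Quantum query algorithms -/

/-- The standard quantum query oracle `O_x |j,p⟩|w⟩ = |j, p + x_j mod S⟩|w⟩`,
as a matrix. -/
noncomputable def qOracle {V ω : Type} [DecidableEq V] [DecidableEq ω] {S : ℕ}
    (x : V → Fin S) : Matrix (V × Fin S × ω) (V × Fin S × ω) ℂ :=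
  fun r c => if r = (c.1, c.2.1 + x c.1, c.2.2) then 1 else 0

/-- A quantum query algorithm on inputs `x : V → Fin S`, making `queries` queries, with
workspace `Fin (W+1)`, alternating the unitaries `U 0, …, U queries` with the oracle,
and measuring with the projector `P` at the end. -/
structure QAlg (V : Type) [Fintype V] [DecidableEq V] (S : ℕ) [NeZero S] where
  queries : ℕ
  W : ℕ
  init : V
  U : ℕ → Matrix (V × Fin S × Fin (W + 1)) (V × Fin S × Fin (W + 1)) ℂ
  hU : ∀ t, (U t).conjTranspose * U t = 1 ∧ U t * (U t).conjTranspose = 1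
  P : Matrix (V × Fin S × Fin (W + 1)) (V × Fin S × Fin (W + 1)) ℂ
  hP : P.conjTranspose = P ∧ P * P = P

namespace QAlg

variable {V : Type} [Fintype V] [DecidableEq V] {S : ℕ} [NeZero S]

/-- The state of the quantum algorithm after `t` steps on input `x`. -/
noncomputable def state (A : QAlg V S) (x : V → Fin S) :
    ℕ → (V × Fin S × Fin (A.W + 1) → ℂ)
  | 0 => (A.U 0).mulVec fun r => if r = (A.init, 0, 0) then 1 else 0
  | t + 1 => (A.U (t + 1)).mulVec ((qOracle x).mulVec (A.state x t))

/-- The probability that the algorithm accepts input `x`: `‖P |Ψ_x⟩‖²`. -/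
noncomputable def acceptProb (A : QAlg V S) (x : V → Fin S) : ℝ :=
  ∑ r : V × Fin S × Fin (A.W + 1), Complex.normSq (A.P.mulVec (A.state x A.queries) r)

end QAlg

/-- Bounded-error quantum query complexity (for functions over a finite input
alphabet `σ`, identified with `Fin (card σ)` via a fixed bijection). -/
noncomputable def Qquery {V σ : Type} [Fintype V] [DecidableEq V] [Fintype σ] [Nonempty σ]
    (f : (V → σ) → Bool) : ℕ :=
  letI : NeZero (Fintype.card σ) := ⟨Fintype.card_ne_zero⟩
  sInf {t : ℕ | ∃ A : QAlg V (Fintype.card σ), A.queries = t ∧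
    ∀ x : V → σ,
      (f x = true → 9 / 10 ≤ A.acceptProb fun j => Fintype.equivFin σ (x j)) ∧
      (f x = false → A.acceptProb (fun j => Fintype.equivFin σ (x j)) ≤ 1 / 10)}

/-- Exact quantum query complexity. -/
noncomputable def QEquery {V σ : Type} [Fintype V] [DecidableEq V] [Fintype σ] [Nonempty σ]
    (f : (V → σ) → Bool) : ℕ :=
  letI : NeZero (Fintype.card σ) := ⟨Fintype.card_ne_zero⟩
  sInf {t : ℕ | ∃ A : QAlg V (Fintype.card σ), A.queries = t ∧
    ∀ x : V → σ,
      (f x = true → A.acceptProb (fun j => Fintype.equivFin σ (x j)) = 1) ∧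
      (f x = false → A.acceptProb (fun j => Fintype.equivFin σ (x j)) = 0)}

/-- Approximate degree of a boolean function. -/
noncomputable def adeg {ι : Type} (F : (ι → Bool) → Bool) : ℕ :=
  sInf {d : ℕ | ∃ p : MvPolynomial ι ℝ, p.totalDegree ≤ d ∧
    ∀ y : ι → Bool, |MvPolynomial.eval (fun i => if y i then (1 : ℝ) else 0) p -
      (if F y then 1 else 0)| ≤ 1 / 10}
/-! ### The pointer functions of Göös–Pitassi–Watson type -/

/-- A symbol of the input alphabet: a boolean value, a left pointer, a right pointer,
and a back/internal pointer (to a cell or a column, depending on `β`). -/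
structure PSym (n m : ℕ) (β : Type) where
  val : Bool
  lp : Option (Fin n × Fin m)
  rp : Option (Fin n × Fin m)
  bp : Option β
deriving DecidableEq

/-- The all-ones symbol `(1,⊥,⊥,⊥)`. -/
def PSym.one (n m : ℕ) (β : Type) : PSym n m β := ⟨true, none, none, none⟩

/-- The symbol `(0,⊥,⊥,⊥)`. -/
def PSym.zero (n m : ℕ) (β : Type) : PSym n m β := ⟨false, none, none, none⟩

def PSym.equivProd (n m : ℕ) (β : Type) :
    PSym n m β ≃ Bool × Option (Fin n × Fin m) × Option (Fin n × Fin m) × Option β where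
  toFun v := (v.val, v.lp, v.rp, v.bp)
  invFun p := ⟨p.1, p.2.1, p.2.2.1, p.2.2.2⟩
  left_inv _ := rfl
  right_inv _ := rfl

instance {n m : ℕ} {β : Type} [Fintype β] : Fintype (PSym n m β) :=
  Fintype.ofEquiv _ (PSym.equivProd n m β).symm

instance {n m : ℕ} {β : Type} : Nonempty (PSym n m β) := ⟨PSym.one n m β⟩

/-- The sequence of k bits of `j`, most significant first:  the root-to-leaf path
(`false` = left, `true` = right) of the `j`-th leaf in the complete binary tree of depth `k`. -/
def bitsPath (k j : ℕ) : List Bool :=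
  ((List.range k).reverse).map fun i => j.testBit i

/-- The root-to-leaf path of the leaf labeled `j` (0-indexed) in the balanced binary tree
with `m` leaves: the complete binary tree if `m` is a power of 2, and otherwise the complete
binary tree on `2 ^ ⌊log₂ m⌋` leaves with a pair of children added to each of the
`m - 2 ^ ⌊log₂ m⌋` leftmost leaves. -/
def treePath (m j : ℕ) : List Bool :=
  if m - 2 ^ Nat.log 2 m = 0 then bitsPath (Nat.log 2 m) j
  else if j < 2 * (m - 2 ^ Nat.log 2 m) then
    bitsPath (Nat.log 2 m) (j / 2) ++ [j % 2 == 1]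
  else bitsPath (Nat.log 2 m) (j - (m - 2 ^ Nat.log 2 m))

/-- Starting at cell `a` and following the left/right pointers of `x` as prescribed by the
list `p` of moves (`false` = left pointer, `true` = right pointer); returns `none` if a
null pointer is encountered. -/
def followPath {n m : ℕ} {β : Type} (x : Fin n × Fin m → PSym n m β)
    (a : Fin n × Fin m) (p : List Bool) : Option (Fin n × Fin m) :=
  p.foldl (fun acc b => acc.bind fun c => if b then (x c).rp else (x c).lp) (some a)

/-- The conditions for `x` to be a 1-input of `f_{n,m}`, with marked column `b` and special
element `a`: (1) `b` is the unique all-1 column; (2) `a` is the unique cell of column `b`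
with `x_a ≠ (1,⊥,⊥,⊥)`; (3) for every column `j ≠ b` the tree path from `a` to the leaf
labeled `j` exists, and ends at a cell `ℓ_j` of column `j` holding a 0; (4) the back pointer
of each `ℓ_j` points to the column `b`. -/
def fCond (n m : ℕ) (x : Fin n × Fin m → PSym n m (Fin m))
    (b : Fin m) (a : Fin n × Fin m) : Prop :=
  (∀ j : Fin m, (∀ i : Fin n, (x (i, j)).val = true) ↔ j = b) ∧
  a.2 = b ∧
  (∀ i : Fin n, x (i, b) ≠ PSym.one n m (Fin m) ↔ (i, b) = a) ∧
  ∀ j : Fin m, j ≠ b →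
    ∃ ℓ : Fin n × Fin m, followPath x a (treePath m j.1) = some ℓ ∧
      ℓ.2 = j ∧ (x ℓ).val = false ∧ (x ℓ).bp = some b

/-- The pointer function `f_{n,m}`, with back pointers to the marked column. -/
noncomputable def fFun (n m : ℕ) (x : Fin n × Fin m → PSym n m (Fin m)) : Bool :=
  if ∃ b a, fCond n m x b a then true else false

/-- The conditions for `x` to be a 1-input of `g_{n,m}`, with marked column `b` and special
element `a`: (1)–(3) as for `f_{n,m}`, and (4′) the set of columns `j ≠ b` whose highlighted
zero `ℓ_j` has back pointer to `a` has size exactly `m/2`. -/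
def gCond (n m : ℕ) (x : Fin n × Fin m → PSym n m (Fin n × Fin m))
    (b : Fin m) (a : Fin n × Fin m) : Prop :=
  (∀ j : Fin m, (∀ i : Fin n, (x (i, j)).val = true) ↔ j = b) ∧
  a.2 = b ∧
  (∀ i : Fin n, x (i, b) ≠ PSym.one n m (Fin n × Fin m) ↔ (i, b) = a) ∧
  (∀ j : Fin m, j ≠ b →
    ∃ ℓ : Fin n × Fin m, followPath x a (treePath m j.1) = some ℓ ∧
      ℓ.2 = j ∧ (x ℓ).val = false) ∧
  {j : Fin m | j ≠ b ∧ ∃ ℓ : Fin n × Fin m,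
      followPath x a (treePath m j.1) = some ℓ ∧ (x ℓ).bp = some a}.ncard = m / 2

/-- The pointer function `g_{n,m}`, where exactly `m/2` of the highlighted zeroes point
back to the special element. -/
noncomputable def gFun (n m : ℕ) (x : Fin n × Fin m → PSym n m (Fin n × Fin m)) : Bool :=
  if ∃ b a, gCond n m x b a then true else false

/-- Column `j` is good in `x` (for `g_{n,m}`): `x` is a 1-input with marked column `b ≠ j`
and special element `a`, and the highlighted zero of column `j` points back to `a`. -/
def goodColumn (n m : ℕ) (x : Fin n × Fin m → PSym n m (Fin n × Fin m)) (j : Fin m) : Prop :=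
  ∃ b a, gCond n m x b a ∧ j ≠ b ∧
    ∃ ℓ : Fin n × Fin m, followPath x a (treePath m j.1) = some ℓ ∧ (x ℓ).bp = some a

/-- The conditions for `x` to be a 1-input of `h_{k,n,m}`, with marked columns `b 0,…,b (k-1)`
and special elements `a 0,…,a (k-1)`: (1) the `b s` are exactly the all-1 columns; (2) `a s` is
the unique cell of column `b s` with `x_{a s} ≠ (1,⊥,⊥,⊥)`; (3) the internal pointers of the
`a s` form a cycle and all the `a s` have equal left pointers and equal right pointers;
(4) for every non-marked column `j` the tree path from any `a s` to the leaf labeled `j`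
exists and ends at a cell `ℓ_j` of column `j` holding a 0. -/
def hCond (k n m : ℕ) (x : Fin n × Fin m → PSym n m (Fin n × Fin m))
    (b : Fin k → Fin m) (a : Fin k → Fin n × Fin m) : Prop :=
  Function.Injective b ∧
  (∀ j : Fin m, (∀ i : Fin n, (x (i, j)).val = true) ↔ ∃ s, b s = j) ∧
  (∀ s, (a s).2 = b s) ∧
  (∀ s, ∀ i : Fin n, x (i, b s) ≠ PSym.one n m (Fin n × Fin m) ↔ (i, b s) = a s) ∧
  (∀ s : Fin k, (x (a s)).bp = some (a ⟨(s.1 + 1) % k, Nat.mod_lt _ s.pos⟩)) ∧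
  (∀ s t : Fin k, (x (a s)).lp = (x (a t)).lp ∧ (x (a s)).rp = (x (a t)).rp) ∧
  ∀ j : Fin m, (∀ s, b s ≠ j) → ∀ s : Fin k,
    ∃ ℓ : Fin n × Fin m, followPath x (a s) (treePath m j.1) = some ℓ ∧
      ℓ.2 = j ∧ (x ℓ).val = false

/-- The pointer function `h_{k,n,m}` with `k` marked columns and no back pointers. -/
noncomputable def hFun (k n m : ℕ) (x : Fin n × Fin m → PSym n m (Fin n × Fin m)) : Bool :=
  if ∃ b a, hCond k n m x b a then true else false

/-- The hard input `x^ℓ`: cell `(i,j)` holds `(0,⊥,⊥,⊥)` if `i = ℓ j` and `(1,⊥,⊥,⊥)`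
otherwise. -/
def xhard (n m : ℕ) (β : Type) (ℓ : Fin m → Fin n) : Fin n × Fin m → PSym n m β :=
  fun c => if c.1 = ℓ c.2 then PSym.zero n m β else PSym.one n m β

/-- The set of (distinct) cells queried among the first `t` queries of `T` on input `x`. -/
def queriedUpTo {ι σ : Type} [DecidableEq ι] (T : DTree ι σ) (x : ι → σ) (t : ℕ) :
    Finset ι :=
  ((T.queryList x).take t).toFinset
/-! ### The progress measure for the hard distribution `x^ℓ` -/

/-- Column `j` is compromised (for the input `x^ℓ`), given the set `Q` of queried cells:
the zero cell `(ℓ j, j)` has been queried, or more than `n/2` cells of column `j` have been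
queried. -/
def compromisedCol (n m : ℕ) (ℓ : Fin m → Fin n) (Q : Finset (Fin n × Fin m))
    (j : Fin m) : Prop :=
  (ℓ j, j) ∈ Q ∨ n < 2 * (Q.filter fun c => c.2 = j).card

/-- The progress measure `I_t = A_t + (2/n)·B_t` of the decision tree `T` on the input `x^ℓ`
after `t` queries, where `A_t` is the number of compromised columns and `B_t` is the number
of queried cells lying outside compromised columns. -/
noncomputable def Imeasure (n m : ℕ)
    (T : DTree (Fin n × Fin m) (PSym n m (Fin n × Fin m))) (ℓ : Fin m → Fin n) (t : ℕ) : ℝ :=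
  ({j : Fin m |
      compromisedCol n m ℓ (queriedUpTo T (xhard n m (Fin n × Fin m) ℓ) t) j}.ncard : ℝ) +
    (2 / n) * ({c : Fin n × Fin m | c ∈ queriedUpTo T (xhard n m (Fin n × Fin m) ℓ) t ∧
      ¬ compromisedCol n m ℓ (queriedUpTo T (xhard n m (Fin n × Fin m) ℓ) t) c.2}.ncard : ℝ)
/-! ### The balanced binary tree, via root-to-node paths -/

/-- The node set of the balanced binary tree with `m` leaves: each node is identified with
the left/right path from the root to it, so the nodes are exactly the prefixes of the
root-to-leaf paths. -/
def treeNodes (m : ℕ) : Finset (List Bool) :=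
  (Finset.range m).biUnion fun j => (treePath m j).inits.toFinset

/-- The leaves of the balanced binary tree with `m` leaves. -/
def leafNodes (m : ℕ) : Finset (List Bool) :=
  (Finset.range m).image fun j => treePath m j

/-- The internal nodes of the balanced binary tree with `m` leaves. -/
def internalNodes (m : ℕ) : Finset (List Bool) :=
  treeNodes m \ leafNodes m

/-- The subtree rooted at a node `u`: all nodes of which `u` is a prefix. -/
def subtreeOf (m : ℕ) (u : List Bool) : Finset (List Bool) :=
  (treeNodes m).filter fun w => u <+: w

/-! ### The hard distribution for `h_{1,n,m}` -/

/-- A parameter quadruple `(v, π, ℓᴸ, ℓᴺ)` for the hard distribution: a bit `v`, a map `π`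
from internal tree nodes to columns, and row maps `ℓᴸ, ℓᴺ` for leaves resp. internal nodes. -/
abbrev HardQ (n m : ℕ) : Type :=
  Bool × ({u : List Bool // u ∈ internalNodes m} → Fin m) × (Fin m → Fin n) × (Fin m → Fin n)

/-- The valid parameter quadruples: `π` injective and `ℓᴸ j ≠ ℓᴺ j` for all `j`. -/
noncomputable def hardSet (n m : ℕ) : Finset (HardQ n m) :=
  Finset.univ.filter fun q => Function.Injective q.2.1 ∧ ∀ j, q.2.2.1 j ≠ q.2.2.2 j

/-- The column of the root of the tree (`none` if the tree has no internal node). -/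
noncomputable def rootCol (n m : ℕ) (q : HardQ n m) : Option (Fin m) :=
  if h : ([] : List Bool) ∈ internalNodes m then some (q.2.1 ⟨[], h⟩) else none

/-- The cell where a child node `w` of an internal node is placed: internal nodes go to
cell `(ℓᴺ (π w), π w)`, the leaf labeled `j` goes to cell `(ℓᴸ j, j)`, and the removed leaf
(the one labeled by the root's column) yields a null pointer. -/
noncomputable def childCell (n m : ℕ) (q : HardQ n m) (w : List Bool) :
    Option (Fin n × Fin m) :=
  if h : w ∈ internalNodes m then some (q.2.2.2 (q.2.1 ⟨w, h⟩), q.2.1 ⟨w, h⟩)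
  else if h2 : ∃ j : Fin m, w = treePath m j.1 ∧ some j ≠ rootCol n m q then
    some (q.2.2.1 (Classical.choose h2), Classical.choose h2)
  else none

/-- The input of the hard distribution determined by the parameter quadruple `q`:
the internal node `u` of the tree is placed at cell `(ℓᴺ (π u), π u)` with left and right
pointers to the cells of its children, value `v` and a self-loop internal pointer if `u` is
the root, and value 0 otherwise; for `j ≠ π(root)`, the leaf labeled `j` is placed at cell
`(ℓᴸ j, j)` with value 0 and null pointers; all the remaining cells hold `(1,⊥,⊥,⊥)`. -/
noncomputable def hardInput (n m : ℕ) (q : HardQ n m) :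
    Fin n × Fin m → PSym n m (Fin n × Fin m) :=
  fun c =>
    if h : ∃ u : {u : List Bool // u ∈ internalNodes m}, q.2.1 u = c.2 ∧ q.2.2.2 c.2 = c.1 then
      { val := if (Classical.choose h).1 = [] then q.1 else false
        lp := childCell n m q ((Classical.choose h).1 ++ [false])
        rp := childCell n m q ((Classical.choose h).1 ++ [true])
        bp := if (Classical.choose h).1 = [] then some c else none }
    else if some c.2 ≠ rootCol n m q ∧ c.1 = q.2.2.1 c.2 then PSym.zero n m (Fin n × Fin m)
    else PSym.one n m (Fin n × Fin m)

/-- Column `j` directly satisfies (i) or (ii): one of the cells `(ℓᴸ j, j)`, `(ℓᴺ j, j)` has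
been queried, or more than half of the cells of column `j` have been queried. -/
def colBad (n m : ℕ) (q : HardQ n m) (Q : Finset (Fin n × Fin m)) (j : Fin m) : Prop :=
  (q.2.2.1 j, j) ∈ Q ∨ (q.2.2.2 j, j) ∈ Q ∨ n < 2 * (Q.filter fun c => c.2 = j).card

/-- Column `j` is compromised: it satisfies (i) or (ii), or some ancestor `u` of `π⁻¹(j)`
in the tree is such that column `π u` satisfies (i) or (ii). -/
def compromisedCol19 (n m : ℕ) (q : HardQ n m) (Q : Finset (Fin n × Fin m))
    (j : Fin m) : Prop :=
  colBad n m q Q j ∨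
  ∃ w u : {u : List Bool // u ∈ internalNodes m}, q.2.1 w = j ∧
    u.1 <+: w.1 ∧ u.1 ≠ w.1 ∧ colBad n m q Q (q.2.1 u)

/-- The progress measure `I_t = min{A_t + (4·C0·log₂ m / n)·B_t, m/2}` of the decision tree
`D` on the hard-distribution input given by `q` after `t` queries, where `A_t` is the number
of compromised columns and `B_t` the number of queried cells outside compromised columns. -/
noncomputable def Imeasure19 (n m : ℕ) (C0 : ℝ)
    (D : DTree (Fin n × Fin m) (PSym n m (Fin n × Fin m))) (q : HardQ n m) (t : ℕ) : ℝ :=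
  min
    (({j : Fin m | compromisedCol19 n m q (queriedUpTo D (hardInput n m q) t) j}.ncard : ℝ) +
      (4 * C0 * Real.logb 2 m / n) *
        ({c : Fin n × Fin m | c ∈ queriedUpTo D (hardInput n m q) t ∧
          ¬ compromisedCol19 n m q (queriedUpTo D (hardInput n m q) t) c.2}.ncard : ℝ))
    (m / 2)

/-!
An adversary argument. Suppose `T` reads at most `m - k` zeros of `x^ℓ` and at most
`n(m-k) - 2m` cells. Then `k` columns have an unread zero; these zeros become the special
elements, each a copy of the root of the balanced tree (value 1, cyclic `ipoint`, pointers to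
the root's children). Outside those columns at least `(m-k)(n-1) - (n(m-k) - 2m) = m + k`
cells holding a 1 are unread, enough to host the fewer than `m` other internal nodes, while
the leaves are the zeros of the unmarked columns. This is a 1-input of `h_{k,n,m}` agreeing
with `x^ℓ` on every cell that `T` reads.
-/

open Finset

theorem DTree.eval_eq_of_forall_mem_queryList {ι σ : Type} {x y : ι → σ} :
    ∀ T : DTree ι σ, (∀ v ∈ T.queryList x, y v = x v) → T.eval y = T.eval x
  | .leaf _, _ => rfl
  | .node v child, h => by
    have hv : y v = x v := h v List.mem_cons_self
    simp only [DTree.eval, hv]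
    exact eval_eq_of_forall_mem_queryList _ fun u hu => h u (List.mem_cons_of_mem _ hu)

theorem length_bitsPath (k j : ℕ) : (bitsPath k j).length = k := by simp [bitsPath]

theorem eq_of_bitsPath_eq {k j j' : ℕ} (hj : j < 2 ^ k) (hj' : j' < 2 ^ k)
    (h : bitsPath k j = bitsPath k j') : j = j' := by
  refine Nat.eq_of_testBit_eq fun i => ?_
  by_cases hik : i < k
  · exact List.map_inj_left.mp h i (by simpa using hik)
  · have hk : 2 ^ k ≤ 2 ^ i := Nat.pow_le_pow_right (by norm_num) (not_lt.mp hik)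
    rw [Nat.testBit_eq_false_of_lt (by omega), Nat.testBit_eq_false_of_lt (by omega)]

theorem lt_two_mul_two_pow_log (m : ℕ) : m < 2 * 2 ^ Nat.log 2 m := by
  simpa [pow_succ, mul_comm] using Nat.lt_pow_succ_log_self (by norm_num : 1 < 2) m

theorem eq_of_treePath_prefix {m j j' : ℕ} (hj : j < m) (hj' : j' < m)
    (h : treePath m j <+: treePath m j') : j = j' := by
  have hlow : 2 ^ Nat.log 2 m ≤ m := Nat.pow_log_le_self 2 (by omega)
  have hup := lt_two_mul_two_pow_log m
  unfold treePath at h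
  split_ifs at h
  · exact eq_of_bitsPath_eq (by omega) (by omega)
      (h.eq_of_length (by rw [length_bitsPath, length_bitsPath]))
  · obtain ⟨hdiv, hmod⟩ := List.append_inj
      (h.eq_of_length (by simp only [List.length_append, length_bitsPath, List.length_singleton]))
      (by rw [length_bitsPath, length_bitsPath])
    have := eq_of_bitsPath_eq (by omega) (by omega) hdiv
    simp only [List.cons.injEq, and_true] at hmod
    grind
  · have := h.length_le
    simp only [List.length_append, length_bitsPath, List.length_singleton] at this
    omega
  · have hshort : bitsPath (Nat.log 2 m) (j - (m - 2 ^ Nat.log 2 m))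
        = bitsPath (Nat.log 2 m) (j' / 2) := by
      rw [List.prefix_iff_eq_take.mp h, length_bitsPath, List.take_left' (length_bitsPath _ _)]
    have := eq_of_bitsPath_eq (by omega) (by omega) hshort
    omega
  · have := eq_of_bitsPath_eq (by omega) (by omega)
      (h.eq_of_length (by rw [length_bitsPath, length_bitsPath]))
    omega

theorem treePath_ne_nil {m : ℕ} (hm : 2 ≤ m) (j : ℕ) : treePath m j ≠ [] := by
  have : 0 < Nat.log 2 m := Nat.log_pos (by norm_num) hm
  unfold treePath
  split_ifs <;> simp [← List.length_eq_zero_iff, length_bitsPath] <;> omega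

theorem mem_treeNodes {m : ℕ} {u : List Bool} :
    u ∈ treeNodes m ↔ ∃ j < m, u <+: treePath m j := by
  simp [treeNodes, List.mem_inits]

theorem mem_leafNodes {m : ℕ} {u : List Bool} :
    u ∈ leafNodes m ↔ ∃ j < m, treePath m j = u := by
  simp [leafNodes]

theorem leafNodes_subset_treeNodes (m : ℕ) : leafNodes m ⊆ treeNodes m := by
  intro u hu
  obtain ⟨j, hj, rfl⟩ := mem_leafNodes.mp hu
  exact mem_treeNodes.mpr ⟨j, hj, List.prefix_refl _⟩

theorem card_treeNodes_le {m : ℕ} (hm : 1 ≤ m) : #(treeNodes m) ≤ 2 * m - 1 := by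
  have hlow : 2 ^ Nat.log 2 m ≤ m := Nat.pow_log_le_self 2 (by omega)
  have hup := lt_two_mul_two_pow_log m
  set L := Nat.log 2 m with hL
  -- the nodes of depth at most `L`, and the children of the `m - 2 ^ L` split leaves
  set shallow : Finset (List Bool) := (range (L + 1)).biUnion fun d =>
    (univ : Finset (Fin d → Bool)).image List.ofFn
  set deep : Finset (List Bool) :=
    (range (m - 2 ^ L) ×ˢ univ).image fun p => bitsPath L p.1 ++ [p.2]
  have hsub : treeNodes m ⊆ shallow ∪ deep := by
    intro u hu
    obtain ⟨j, hj, hpre⟩ := mem_treeNodes.mp hu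
    by_cases hlen : u.length ≤ L
    · exact mem_union_left _ (mem_biUnion.mpr ⟨u.length, mem_range.mpr (by omega),
        mem_image.mpr ⟨u.get, mem_univ _, List.ofFn_get u⟩⟩)
    · refine mem_union_right _ ?_
      have hlp := hpre.length_le
      unfold treePath at hpre hlp
      rw [← hL] at hpre hlp
      split_ifs at hpre hlp
      · rw [length_bitsPath] at hlp; omega
      · rw [List.length_append, length_bitsPath, List.length_singleton] at hlp
        rw [hpre.eq_of_length (by simp only [List.length_append, length_bitsPath,
          List.length_singleton]; omega)]
        exact mem_image.mpr ⟨(j / 2, j % 2 == 1), by simp; omega, rfl⟩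
      · rw [length_bitsPath] at hlp; omega
  have hshallow : #shallow ≤ 2 ^ (L + 1) - 1 :=
    calc #shallow ≤ ∑ d ∈ range (L + 1), #((univ : Finset (Fin d → Bool)).image List.ofFn) :=
          card_biUnion_le
      _ ≤ ∑ d ∈ range (L + 1), 2 ^ d :=
          sum_le_sum fun d _ => card_image_le.trans (by simp)
      _ = 2 ^ (L + 1) - 1 := by simp [Nat.geomSum_eq le_rfl]
  have hdeep : #deep ≤ (m - 2 ^ L) * 2 := card_image_le.trans (by simp)
  calc #(treeNodes m) ≤ #shallow + #deep := (card_le_card hsub).trans (card_union_le _ _)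
    _ ≤ 2 * m - 1 := by rw [pow_succ] at hshallow; omega

theorem card_leafNodes (m : ℕ) : #(leafNodes m) = m := by
  rw [leafNodes, card_image_of_injOn, card_range]
  intro j hj j' hj' h
  exact eq_of_treePath_prefix (by simpa using hj) (by simpa using hj') (by simp only at h; rw [h])

theorem card_internalNodes_le {m : ℕ} (hm : 1 ≤ m) : #(internalNodes m) ≤ m - 1 := by
  rw [internalNodes, card_sdiff_of_subset (leafNodes_subset_treeNodes m), card_leafNodes]
  have := card_treeNodes_le hm
  omega

theorem treePath_not_mem_internalNodes {m j : ℕ} (hj : j < m) : treePath m j ∉ internalNodes m :=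
  fun h => (mem_sdiff.mp h).2 (mem_leafNodes.mpr ⟨j, hj, rfl⟩)

theorem mem_internalNodes_of_prefix {m j : ℕ} {u : List Bool} (hj : j < m)
    (hu : u <+: treePath m j) (hne : u ≠ treePath m j) : u ∈ internalNodes m := by
  refine mem_sdiff.mpr ⟨mem_treeNodes.mpr ⟨j, hj, hu⟩, fun hleaf => hne ?_⟩
  obtain ⟨j', hj', rfl⟩ := mem_leafNodes.mp hleaf
  rw [eq_of_treePath_prefix hj' hj hu]

theorem followPath_cons_of_eq_some {n m : ℕ} {β : Type} {x : Fin n × Fin m → PSym n m β}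
    {a c : Fin n × Fin m} {d : Bool} (p : List Bool)
    (h : (if d then (x a).rp else (x a).lp) = some c) :
    followPath x a (d :: p) = followPath x c p := by
  simp [followPath, h]

theorem xhard_val_eq_false_iff {n m : ℕ} {β : Type} (ℓ : Fin m → Fin n) (c : Fin n × Fin m) :
    (xhard n m β ℓ c).val = false ↔ c.1 = ℓ c.2 := by
  unfold xhard
  split_ifs with h <;> simp [h, PSym.zero, PSym.one]

theorem hFun_xhard {n m k : ℕ} (hk : 0 < k) (ℓ : Fin m → Fin n) :
    hFun k n m (xhard n m (Fin n × Fin m) ℓ) = false := by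
  rw [hFun, if_neg]
  rintro ⟨b, a, -, hmarked, -⟩
  have hzero := xhard_val_eq_false_iff (β := Fin n × Fin m) ℓ (ℓ (b ⟨0, hk⟩), b ⟨0, hk⟩)
  simp [(hmarked _).mpr ⟨⟨0, hk⟩, rfl⟩] at hzero

section PlantedTree

variable {n m k : ℕ} (ℓ : Fin m → Fin n) (b : Fin k ↪ Fin m)
  (φ : {u // u ∈ (internalNodes m).erase []} ↪ Fin n × Fin m)

def specialCell (s : Fin k) : Fin n × Fin m := (ℓ (b s), b s)

def freeCells : Finset (Fin n × Fin m) :=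
  univ.filter fun c => c.2 ∉ Set.range b ∧ c.1 ≠ ℓ c.2

noncomputable def nodeCell (w : List Bool) : Option (Fin n × Fin m) :=
  if hw : w ∈ (internalNodes m).erase [] then some (φ ⟨w, hw⟩)
  else if h : ∃ j : Fin m, treePath m j = w then some (ℓ h.choose, h.choose)
  else none

noncomputable def plantedInput : Fin n × Fin m → PSym n m (Fin n × Fin m) := fun c =>
  if h : ∃ s, specialCell ℓ b s = c then
    ⟨true, nodeCell ℓ φ [false], nodeCell ℓ φ [true],
      some (specialCell ℓ b ⟨(h.choose.1 + 1) % k, Nat.mod_lt _ h.choose.pos⟩)⟩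
  else if h : ∃ u, φ u = c then
    ⟨true, nodeCell ℓ φ (h.choose.1 ++ [false]), nodeCell ℓ φ (h.choose.1 ++ [true]), none⟩
  else xhard n m _ ℓ c

variable {ℓ b φ}

theorem mem_freeCells {c : Fin n × Fin m} :
    c ∈ freeCells ℓ b ↔ c.2 ∉ Set.range b ∧ c.1 ≠ ℓ c.2 := by
  simp [freeCells]

theorem nodeCell_of_mem {w : List Bool} (hw : w ∈ (internalNodes m).erase []) :
    nodeCell ℓ φ w = some (φ ⟨w, hw⟩) := by
  rw [nodeCell, dif_pos hw]

theorem nodeCell_treePath (j : Fin m) : nodeCell ℓ φ (treePath m j) = some (ℓ j, j) := by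
  have hleaf : ∃ j' : Fin m, treePath m j' = treePath m j := ⟨j, rfl⟩
  have hchoose : hleaf.choose = j :=
    Fin.ext (eq_of_treePath_prefix hleaf.choose.isLt j.isLt (by rw [hleaf.choose_spec]))
  rw [nodeCell, dif_neg fun h => treePath_not_mem_internalNodes j.isLt (mem_of_mem_erase h),
    dif_pos hleaf, hchoose]

theorem plantedInput_specialCell (s : Fin k) :
    plantedInput ℓ b φ (specialCell ℓ b s) = ⟨true, nodeCell ℓ φ [false], nodeCell ℓ φ [true],
      some (specialCell ℓ b ⟨(s.1 + 1) % k, Nat.mod_lt _ s.pos⟩)⟩ := by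
  have h : ∃ t, specialCell ℓ b t = specialCell ℓ b s := ⟨s, rfl⟩
  have hchoose : h.choose = s := b.injective (congrArg Prod.snd h.choose_spec)
  rw [plantedInput, dif_pos h]
  simp only [hchoose]

theorem plantedInput_embedding (hφ : ∀ u, φ u ∈ freeCells ℓ b) (u) :
    plantedInput ℓ b φ (φ u) =
      ⟨true, nodeCell ℓ φ (u.1 ++ [false]), nodeCell ℓ φ (u.1 ++ [true]), none⟩ := by
  have hspecial : ¬∃ s, specialCell ℓ b s = φ u := by
    rintro ⟨s, hs⟩
    exact (mem_freeCells.mp (hφ u)).1 ⟨s, congrArg Prod.snd hs⟩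
  have h : ∃ v, φ v = φ u := ⟨u, rfl⟩
  rw [plantedInput, dif_neg hspecial, dif_pos h, φ.injective h.choose_spec]

theorem plantedInput_of_forall_ne {c : Fin n × Fin m} (hspecial : ∀ s, specialCell ℓ b s ≠ c)
    (hφ : ∀ u, φ u ≠ c) : plantedInput ℓ b φ c = xhard n m _ ℓ c := by
  rw [plantedInput, dif_neg (not_exists.mpr hspecial), dif_neg (not_exists.mpr hφ)]

theorem plantedInput_val_eq_false_iff (hφ : ∀ u, φ u ∈ freeCells ℓ b) (c : Fin n × Fin m) :
    (plantedInput ℓ b φ c).val = false ↔ c.1 = ℓ c.2 ∧ c.2 ∉ Set.range b := by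
  by_cases hspecial : ∃ s, specialCell ℓ b s = c
  · obtain ⟨s, rfl⟩ := hspecial
    rw [plantedInput_specialCell]
    simp [specialCell]
  by_cases hplaced : ∃ u, φ u = c
  · obtain ⟨u, rfl⟩ := hplaced
    simp [plantedInput_embedding hφ, (mem_freeCells.mp (hφ u)).2]
  rw [plantedInput_of_forall_ne (not_exists.mp hspecial) (not_exists.mp hplaced),
    xhard_val_eq_false_iff]
  refine ⟨fun h => ⟨h, ?_⟩, And.left⟩
  rintro ⟨s, hs⟩
  exact hspecial ⟨s, Prod.ext (by simp [specialCell, h, hs]) hs⟩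

theorem followPath_plantedInput (hφ : ∀ u, φ u ∈ freeCells ℓ b) (j : Fin m) :
    ∀ (p w : List Bool) (c : Fin n × Fin m), w ++ p = treePath m j → p ≠ [] →
      (∀ d : Bool, (if d then (plantedInput ℓ b φ c).rp else (plantedInput ℓ b φ c).lp) =
        nodeCell ℓ φ (w ++ [d])) →
      followPath (plantedInput ℓ b φ) c p = some (ℓ j, j)
  | [], _, _, _, hp, _ => absurd rfl hp
  | d :: p, w, c, hpath, _, hc => by
    by_cases hp : p = []
    · subst hp
      rw [followPath_cons_of_eq_some [] ((hc d).trans (by rw [hpath, nodeCell_treePath]))]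
      rfl
    have hpath' : w ++ [d] ++ p = treePath m j := by simpa using hpath
    have hproper : w ++ [d] ≠ treePath m j := by
      intro h
      rw [← h, List.append_right_eq_self] at hpath'
      exact hp hpath'
    have hu : w ++ [d] ∈ (internalNodes m).erase [] :=
      mem_erase.mpr ⟨by simp, mem_internalNodes_of_prefix j.isLt ⟨p, hpath'⟩ hproper⟩
    rw [followPath_cons_of_eq_some p ((hc d).trans (nodeCell_of_mem hu))]
    exact followPath_plantedInput hφ j p (w ++ [d]) _ hpath' hp
      fun d' => by rw [plantedInput_embedding hφ]; cases d' <;> rfl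

theorem hCond_plantedInput (hm : 2 ≤ m) (hφ : ∀ u, φ u ∈ freeCells ℓ b) :
    hCond k n m (plantedInput ℓ b φ) b (specialCell ℓ b) := by
  have hval := plantedInput_val_eq_false_iff hφ
  refine ⟨b.injective, fun j => ⟨fun hall => ?_, ?_⟩, fun _ => rfl, fun s i => ?_,
    fun s => by rw [plantedInput_specialCell], fun s t => by simp [plantedInput_specialCell],
    fun j hj s => ⟨(ℓ j, j), ?_, rfl, (hval _).mpr ⟨rfl, by simpa using hj⟩⟩⟩
  · by_contra hj
    have hzero := hall (ℓ j)
    rw [← Bool.not_eq_false, hval] at hzero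
    exact hzero ⟨rfl, hj⟩
  · rintro ⟨s, rfl⟩ i
    rw [← Bool.not_eq_false, hval]
    exact fun h => h.2 ⟨s, rfl⟩
  · by_cases hi : i = ℓ (b s)
    · subst hi
      rw [show (ℓ (b s), b s) = specialCell ℓ b s from rfl, plantedInput_specialCell]
      simp [PSym.one]
    · have hspecial : ∀ t, specialCell ℓ b t ≠ (i, b s) := fun t h => by
        obtain rfl := b.injective (congrArg Prod.snd h)
        exact hi (congrArg Prod.fst h).symm
      have hplaced : ∀ u, φ u ≠ (i, b s) := fun u h =>
        (mem_freeCells.mp (hφ u)).1 ⟨s, by rw [h]⟩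
      rw [plantedInput_of_forall_ne hspecial hplaced]
      simp [xhard, hi, specialCell]
  · refine followPath_plantedInput hφ j _ [] _ rfl (treePath_ne_nil hm j) fun d => ?_
    rw [plantedInput_specialCell]
    cases d <;> rfl

theorem hFun_plantedInput (hm : 2 ≤ m) (hφ : ∀ u, φ u ∈ freeCells ℓ b) :
    hFun k n m (plantedInput ℓ b φ) = true := by
  rw [hFun, if_pos ⟨b, specialCell ℓ b, hCond_plantedInput hm hφ⟩]

end PlantedTree

theorem card_freeCells_ge {n m k : ℕ} (ℓ : Fin m → Fin n) (b : Fin k ↪ Fin m) :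
    n * (m - k) - (m - k) ≤ #(freeCells ℓ b) := by
  set unmarked := (univ.map b)ᶜ
  have hunmarked : #unmarked = m - k := by simp [unmarked, card_compl]
  calc n * (m - k) - (m - k)
      ≤ #(univ ×ˢ unmarked) - #(unmarked.image fun j => (ℓ j, j)) := by
        rw [card_product, hunmarked, card_univ, Fintype.card_fin]
        exact Nat.sub_le_sub_left (card_image_le.trans hunmarked.le) _
    _ ≤ #(univ ×ˢ unmarked \ unmarked.image fun j => (ℓ j, j)) := le_card_sdiff _ _
    _ ≤ #(freeCells ℓ b) := card_le_card fun c hc => by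
        simp only [unmarked, mem_sdiff, mem_product, mem_univ, true_and, mem_image,
          not_exists, not_and] at hc
        refine mem_freeCells.mpr ⟨by simpa using hc.1, fun h => hc.2 c.2 hc.1 ?_⟩
        rw [← h]

theorem exists_embedding_unqueried_zeros {n m k : ℕ} (ℓ : Fin m → Fin n)
    {Q : Finset (Fin n × Fin m)} (hQ : #(Q.filter fun c => c.1 = ℓ c.2) ≤ m - k) (hk : k ≤ m) :
    ∃ b : Fin k ↪ Fin m, ∀ s, (ℓ (b s), b s) ∉ Q := by
  have hqueried : #(univ.filter fun j => (ℓ j, j) ∈ Q) ≤ m - k :=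
    (card_le_card_of_injOn (fun j => (ℓ j, j)) (fun j hj => by simpa using hj)
      fun _ _ _ _ h => congrArg Prod.snd h).trans hQ
  have hcard : Fintype.card (Fin k) ≤ Fintype.card {j : Fin m // (ℓ j, j) ∉ Q} := by
    have := card_filter_add_card_filter_not (s := univ) fun j : Fin m => (ℓ j, j) ∈ Q
    rw [Fintype.card_fin, Fintype.card_subtype]
    simp only [card_univ, Fintype.card_fin] at this
    omega
  obtain ⟨e⟩ := Function.Embedding.nonempty_of_card_le hcard
  exact ⟨e.trans (Function.Embedding.subtype _), fun s => (e s).2⟩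

theorem exists_embedding_freeCells {n m k : ℕ} (hm : 1 ≤ m) (ℓ : Fin m → Fin n)
    (b : Fin k ↪ Fin m) {Q : Finset (Fin n × Fin m)} (hQ : (#Q : ℤ) ≤ n * (m - k) - 2 * m) :
    ∃ φ : {u // u ∈ (internalNodes m).erase []} ↪ Fin n × Fin m,
      ∀ u, φ u ∈ freeCells ℓ b ∧ φ u ∉ Q := by
  have hk : k ≤ m := by simpa using Fintype.card_le_of_embedding b
  have hQ' : #Q + 2 * m ≤ n * (m - k) := by zify [hk]; linarith
  have hcard : Fintype.card {u // u ∈ (internalNodes m).erase []} ≤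
      Fintype.card {c // c ∈ freeCells ℓ b \ Q} := by
    have := card_internalNodes_le hm
    have := card_erase_le (s := internalNodes m) (a := [])
    have := le_card_sdiff Q (freeCells ℓ b)
    have := card_freeCells_ge ℓ b
    rw [Fintype.card_coe, Fintype.card_coe]
    omega
  obtain ⟨e⟩ := Function.Embedding.nonempty_of_card_le hcard
  exact ⟨e.trans (Function.Embedding.subtype _), fun u => mem_sdiff.mp (e u).2⟩

theorem statement13_general (n m k : ℕ) (hk1 : 1 ≤ k) (hk2 : k < m)
    (T : DTree (Fin n × Fin m) (PSym n m (Fin n × Fin m)))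
    (hT : T.Computes (hFun k n m)) (ℓ : Fin m → Fin n) :
    m - k + 1 ≤ ((T.queryList (xhard n m (Fin n × Fin m) ℓ)).toFinset.filter
        fun c => (xhard n m (Fin n × Fin m) ℓ c).val = false).card ∨
      (n : ℤ) * ((m : ℤ) - k) - 2 * m <
        ((T.queryList (xhard n m (Fin n × Fin m) ℓ)).toFinset.card : ℤ) := by
  by_contra! h
  obtain ⟨hzeros, hsize⟩ := h
  simp only [xhard_val_eq_false_iff] at hzeros
  set x := xhard n m (Fin n × Fin m) ℓ
  set Q := (T.queryList x).toFinset
  obtain ⟨b, hb⟩ := exists_embedding_unqueried_zeros ℓ (Q := Q) (by omega) hk2.le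
  obtain ⟨φ, hφ⟩ := exists_embedding_freeCells (by omega) ℓ b hsize
  have hagree : ∀ c ∈ T.queryList x, plantedInput ℓ b φ c = x c := by
    intro c hc
    have hcQ : c ∈ Q := List.mem_toFinset.mpr hc
    exact plantedInput_of_forall_ne (fun s hs => hb s (by rwa [← hs] at hcQ))
      fun u hu => (hφ u).2 (by rwa [← hu] at hcQ)
  have heval := (hT _).symm.trans ((T.eval_eq_of_forall_mem_queryList hagree).trans (hT x))
  rw [hFun_plantedInput (by omega) fun u => (hφ u).1, hFun_xhard hk1] at heval
  exact Bool.noConfusion heval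

/-- Any deterministic decision tree computing `h_{k,n,m}`, on any input
`x^ℓ` of the hard distribution, either queries at least `m - k + 1` cells with value 0, or
queries more than `n(m-k) - 2m` cells in total. -/
theorem statement13 (n m k : ℕ) (hn : 2 ≤ n) (hm : 2 ≤ m) (hk1 : 1 ≤ k) (hk2 : k < m)
    (T : DTree (Fin n × Fin m) (PSym n m (Fin n × Fin m)))
    (hT : T.Computes (hFun k n m)) (ℓ : Fin m → Fin n) :
    m - k + 1 ≤ ((T.queryList (xhard n m (Fin n × Fin m) ℓ)).toFinset.filter
        fun c => (xhard n m (Fin n × Fin m) ℓ c).val = false).card ∨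
      (n : ℤ) * ((m : ℤ) - k) - 2 * m <
        ((T.queryList (xhard n m (Fin n × Fin m) ℓ)).toFinset.card : ℤ) :=
  statement13_general n m k hk1 hk2 T hT ℓ
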